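/- The natural density of relatively prime triples of positive integers equals 1/ζ(3): as N → ∞, the number of triples (a,b,c) with 1 ≤ a,b,c ≤ N and gcd(a,b,c) = 1, divided by N³, converges to ζ(3)^{-1} (the reciprocal of Apéry's constant). -/

import Mathlib

/-! Möbius inversion over the divisors of `gcd(a, b, c)` counts the coprime triples in `[1, N]³`
as `∑_{d ≤ N} μ(d) ⌊N/d⌋³`. After division by `N³` the `d`-th term tends to `μ(d)/d³` and is
bounded by `1/d³`, so dominated convergence gives the limit `∑ μ(d)/d³`, which is `1/ζ(3)`
because the Dirichlet series of `μ` and of the constant `1` are inverse to each other. -/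

open Filter Finset ArithmeticFunction
open scoped ArithmeticFunction.Moebius ArithmeticFunction.zeta LSeries.notation Topology

namespace ArithmeticFunction

theorem sum_divisors_moebius (n : ℕ) : ∑ d ∈ n.divisors, μ d = if n = 1 then 1 else 0 := by
  rw [← coe_mul_zeta_apply, moebius_mul_coe_zeta, one_apply]

theorem sum_Icc_filter_dvd_moebius {n N : ℕ} (hn : n ≠ 0) (hnN : n ≤ N) :
    ∑ d ∈ Icc 1 N with d ∣ n, μ d = if n = 1 then 1 else 0 := by
  rw [← sum_divisors_moebius]
  congr 1
  ext d
  simp only [mem_filter, mem_Icc, Nat.mem_divisors, hn, ne_eq, not_false_eq_true, and_true]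
  refine ⟨And.right, fun hd => ⟨⟨Nat.pos_of_dvd_of_pos hd (by omega), ?_⟩, hd⟩⟩
  exact (Nat.le_of_dvd (by omega) hd).trans hnN

theorem tsum_moebius_div_pow {k : ℕ} (hk : 1 < k) :
    ∑' d : ℕ, (μ d : ℝ) / (d : ℝ) ^ k = (∑' n : ℕ, 1 / (n : ℝ) ^ k)⁻¹ := by
  have hk' : 1 < (k : ℂ).re := by simpa using hk
  have hμ : LSeries (↗μ) k = ((∑' d : ℕ, (μ d : ℝ) / (d : ℝ) ^ k : ℝ) : ℂ) := by
    rw [LSeries, Complex.ofReal_tsum]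
    refine tsum_congr fun d => ?_
    rw [LSeries.term_def₀ (by simp), Complex.cpow_neg, Complex.cpow_natCast]
    push_cast
    exact (div_eq_mul_inv _ _).symm
  have hζ : LSeries (↗ζ) k = ((∑' n : ℕ, 1 / (n : ℝ) ^ k : ℝ) : ℂ) := by
    rw [LSeries_zeta_eq_riemannZeta hk', zeta_nat_eq_tsum_of_gt_one hk, Complex.ofReal_tsum]
    push_cast
    rfl
  have h := LSeries_zeta_mul_Lseries_moebius hk'
  rw [hμ, hζ] at h
  exact eq_inv_of_mul_eq_one_right (by exact_mod_cast h)

end ArithmeticFunction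

theorem card_filter_Icc_dvd (N d : ℕ) : #{x ∈ Icc 1 N | d ∣ x} = N / d :=
  Nat.Ioc_filter_dvd_card_eq_div N d

theorem card_filter_dvd_gcd_gcd (A : Finset ℕ) (d : ℕ) :
    #{t ∈ A ×ˢ A ×ˢ A | d ∣ t.1.gcd (t.2.1.gcd t.2.2)} = #{x ∈ A | d ∣ x} ^ 3 := by
  have h : {t ∈ A ×ˢ A ×ˢ A | d ∣ t.1.gcd (t.2.1.gcd t.2.2)} =
      {x ∈ A | d ∣ x} ×ˢ {x ∈ A | d ∣ x} ×ˢ {x ∈ A | d ∣ x} := by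
    ext ⟨a, b, c⟩
    simp only [mem_filter, mem_product, Nat.dvd_gcd_iff]
    tauto
  rw [h, card_product, card_product, pow_three]

theorem card_coprime_triples_eq_sum_moebius (N : ℕ) :
    (#{t ∈ Icc 1 N ×ˢ Icc 1 N ×ˢ Icc 1 N | t.1.gcd (t.2.1.gcd t.2.2) = 1} : ℤ) =
      ∑ d ∈ Icc 1 N, μ d * ((N / d : ℕ) : ℤ) ^ 3 := by
  set A := Icc 1 N
  have hindicator : ∀ t ∈ A ×ˢ A ×ˢ A, (if t.1.gcd (t.2.1.gcd t.2.2) = 1 then 1 else 0 : ℤ) =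
      ∑ d ∈ A, if d ∣ t.1.gcd (t.2.1.gcd t.2.2) then μ d else 0 := by
    rintro ⟨a, b, c⟩ ht
    simp only [A, mem_product, mem_Icc] at ht
    rw [← sum_filter, sum_Icc_filter_dvd_moebius (Nat.gcd_pos_of_pos_left _ (by omega)).ne'
      ((Nat.gcd_le_left _ (by omega)).trans ht.1.2)]
  calc (#{t ∈ A ×ˢ A ×ˢ A | t.1.gcd (t.2.1.gcd t.2.2) = 1} : ℤ)
      = ∑ t ∈ A ×ˢ A ×ˢ A, ∑ d ∈ A, if d ∣ t.1.gcd (t.2.1.gcd t.2.2) then μ d else 0 := by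
        rw [card_filter, Nat.cast_sum]
        push_cast
        exact sum_congr rfl hindicator
    _ = ∑ d ∈ A, μ d * #{t ∈ A ×ˢ A ×ˢ A | d ∣ t.1.gcd (t.2.1.gcd t.2.2)} := by
        rw [sum_comm]
        refine sum_congr rfl fun d _ => ?_
        rw [← sum_filter, sum_const, nsmul_eq_mul, mul_comm]
    _ = ∑ d ∈ A, μ d * ((N / d : ℕ) : ℤ) ^ 3 := by
        simp only [card_filter_dvd_gcd_gcd, A, card_filter_Icc_dvd, Nat.cast_pow]

theorem natCast_div_div_le (N d : ℕ) : ((N / d : ℕ) : ℝ) / N ≤ 1 / d := by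
  rcases eq_or_ne N 0 with rfl | hN
  · simp
  calc ((N / d : ℕ) : ℝ) / N ≤ ((N : ℝ) / d) / N := by gcongr; exact Nat.cast_div_le
    _ = 1 / d := by rw [div_right_comm, div_self (by positivity)]

theorem tendsto_natCast_div_div_atTop (d : ℕ) :
    Tendsto (fun N : ℕ => ((N / d : ℕ) : ℝ) / N) atTop (𝓝 (1 / d)) := by
  rcases eq_or_ne d 0 with rfl | hd
  · simp
  have hfloor := (tendsto_nat_floor_div_atTop (R := ℝ)).comp
    (tendsto_natCast_atTop_atTop.atTop_div_const (by positivity : (0 : ℝ) < d))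
  convert hfloor.mul_const (1 / (d : ℝ)) using 1
  · ext N
    simp only [Function.comp_apply, Nat.floor_div_eq_div]
    field_simp
  · rw [one_mul]

theorem tendsto_sum_mul_natCast_div_div_pow {a : ℕ → ℝ} {C : ℝ} (ha : ∀ d, |a d| ≤ C) {k : ℕ}
    (hk : 1 < k) :
    Tendsto (fun N : ℕ => ∑ d ∈ Icc 1 N, a d * (((N / d : ℕ) : ℝ) / N) ^ k) atTop
      (𝓝 (∑' d : ℕ, a d / (d : ℝ) ^ k)) := by
  -- `N / 0 = 0` and `(0 : ℝ)⁻¹ = 0`, so the `d = 0` terms vanish on both sides.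
  have hvanish : ∀ N d, d ∉ Icc 1 N → a d * (((N / d : ℕ) : ℝ) / N) ^ k = 0 := by
    intro N d hd
    have : N / d = 0 := Nat.div_eq_zero_iff.2 (by simp only [mem_Icc] at hd; omega)
    rw [this, Nat.cast_zero, zero_div, zero_pow (by omega), mul_zero]
  have hC : 0 ≤ C := (abs_nonneg _).trans (ha 0)
  refine (tendsto_tsum_of_dominated_convergence (bound := fun d : ℕ => C * (1 / (d : ℝ)) ^ k)
    ?_ ?_ ?_).congr fun N => tsum_eq_sum (hvanish N)
  · simpa [div_pow] using (Real.summable_one_div_nat_pow.2 hk).mul_left C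
  · intro d
    simpa only [one_div_pow, mul_one_div] using
      ((tendsto_natCast_div_div_atTop d).pow k).const_mul (a d)
  · refine Eventually.of_forall fun N d => ?_
    rw [norm_mul, norm_pow, Real.norm_eq_abs, Real.norm_of_nonneg (by positivity)]
    exact mul_le_mul (ha d) (pow_le_pow_left₀ (by positivity) (natCast_div_div_le N d) k)
      (by positivity) hC

/-- The natural density of relatively prime triples of positive integers equals
`1/ζ(3)`: the number of triples `(a, b, c)` with `1 ≤ a, b, c ≤ N` and
`gcd(a, b, c) = 1`, divided by `N³`, converges to the reciprocal of Apéry's constant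
`ζ(3) = ∑_{n=1}^∞ 1/n³` as `N → ∞`. -/
theorem density_coprime_triples :
    Tendsto
      (fun N : ℕ =>
        (((Finset.Icc 1 N ×ˢ Finset.Icc 1 N ×ˢ Finset.Icc 1 N).filter
            (fun t : ℕ × ℕ × ℕ => Nat.gcd t.1 (Nat.gcd t.2.1 t.2.2) = 1)).card : ℝ) /
          (N : ℝ) ^ 3)
      atTop (nhds (∑' n : ℕ, 1 / ((n : ℝ) + 1) ^ 3)⁻¹) := by
  have hζ : ∑' n : ℕ, 1 / ((n : ℝ) + 1) ^ 3 = ∑' n : ℕ, 1 / (n : ℝ) ^ 3 := by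
    rw [(Real.summable_one_div_nat_pow.2 (by norm_num)).tsum_eq_zero_add]
    simp
  rw [hζ, ← tsum_moebius_div_pow (by norm_num)]
  have hμ : ∀ d, |(μ d : ℝ)| ≤ 1 := fun d => by exact_mod_cast abs_moebius_le_one
  refine (tendsto_sum_mul_natCast_div_div_pow hμ (by norm_num)).congr fun N => ?_
  have hcount := congrArg (Int.cast : ℤ → ℝ) (card_coprime_triples_eq_sum_moebius N)
  simp only [Int.cast_natCast, Int.cast_sum, Int.cast_mul, Int.cast_pow] at hcount
  rw [hcount, sum_div]
  simp only [div_pow, mul_div_assoc]
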